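/- (Comparison of PDE solutions) Let ψ be a branching mechanism of the form ψ(u) = −βu + αu² + ∫₀^∞ (e^{−uy} − 1 + uy) n(dy) for u ≥ 0, and let φ be a nonnegative, bounded, continuous function on ℝ^d. Suppose v, u : [0,∞) × ℝ^d → [0,∞) are jointly continuous, bounded on [0,T] × ℝ^d for every T > 0, once continuously differentiable in t and twice continuously differentiable in x, and satisfy ∂_t v = (1/2)Δv − ψ(v) + φ with v(0,·) = 0, and ∂_t u = (1/2)Δu + βu − αu² + φ with u(0,·) = 0. Then v(t,x) ≤ u(t,x) for all t ≥ 0 and x ∈ ℝ^d. -/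

import Mathlib

open MeasureTheory Real

open Filter Set Topology

/-- At a point `t₀ > 0` which maximizes `G` over `[0, t₀]`, the derivative is `≥ 0`. -/
lemma deriv_nonneg_of_isMaxOn_left {G : ℝ → ℝ} {c t₀ : ℝ} (ht₀ : 0 < t₀)
    (hG : HasDerivAt G c t₀) (hmax : ∀ t ∈ Set.Icc (0:ℝ) t₀, G t ≤ G t₀) : 0 ≤ c := by
  have hslope := hasDerivAt_iff_tendsto_slope.1 hG
  have h1 : Tendsto (slope G t₀) (𝓝[<] t₀) (𝓝 c) :=
    hslope.mono_left (nhdsWithin_mono _ (fun x hx => ne_of_lt hx))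
  refine ge_of_tendsto h1 ?_
  filter_upwards [Ioo_mem_nhdsLT_of_mem (Set.mem_Ioc.2 ⟨ht₀, le_rfl⟩)] with t ht
  rw [slope_def_field]
  have h2 : G t - G t₀ ≤ 0 := sub_nonpos.2 (hmax t ⟨ht.1.le, ht.2.le⟩)
  have h3 : t - t₀ < 0 := sub_neg.2 ht.2
  have h4 := div_nonneg (neg_nonneg.2 h2) (neg_nonneg.2 h3.le)
  rwa [neg_div_neg_eq] at h4

/-- Second derivative test: at an interior local max, the second derivative is `≤ 0`. -/
lemma second_deriv_nonpos_of_isLocalMax {q q' : ℝ → ℝ} {c : ℝ}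
    (hq : ∀ s, HasDerivAt q (q' s) s) (hq' : HasDerivAt q' c 0)
    (hmax : IsLocalMax q 0) : c ≤ 0 := by
  by_contra hc
  push_neg at hc
  have hq'0 : q' 0 = 0 := hmax.hasDerivAt_eq_zero (hq 0)
  have hslope := hasDerivAt_iff_tendsto_slope.1 hq'
  have h1 : Tendsto (slope q' 0) (𝓝[>] 0) (𝓝 c) :=
    hslope.mono_left (nhdsWithin_mono _ (fun x hx => ne_of_gt hx))
  have h2 : ∀ᶠ s in 𝓝[>] (0:ℝ), 0 < slope q' 0 s := h1.eventually_const_lt hc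
  have h3 : ∀ᶠ s in 𝓝[>] (0:ℝ), 0 < q' s := by
    filter_upwards [h2, self_mem_nhdsWithin] with s hs hs'
    rw [slope_def_field, hq'0, sub_zero, sub_zero] at hs
    have : 0 < s := hs'
    have h6 := mul_pos hs this
    rwa [div_mul_cancel₀ _ (ne_of_gt this)] at h6
  obtain ⟨δ, hδ, hδ'⟩ := (mem_nhdsGT_iff_exists_Ioo_subset).1 h3
  have hδpos : (0:ℝ) < δ := hδ
  have hmono : StrictMonoOn q (Set.Icc 0 δ) := by
    apply strictMonoOn_of_deriv_pos (convex_Icc 0 δ)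
    · exact fun s _ => (hq s).continuousAt.continuousWithinAt
    · intro s hs
      rw [interior_Icc] at hs
      rw [(hq s).deriv]
      exact hδ' hs
  have h4 : ∀ᶠ s in 𝓝[>] (0:ℝ), q s ≤ q 0 := (hmax.filter_mono nhdsWithin_le_nhds)
  have h5 : ∀ᶠ s in 𝓝[>] (0:ℝ), q 0 < q s := by
    filter_upwards [Ioo_mem_nhdsGT_of_mem (Set.mem_Ico.2 ⟨le_rfl, hδpos⟩)] with s hs
    exact hmono ⟨le_rfl, hδpos.le⟩ ⟨hs.1.le, hs.2.le⟩ hs.1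
  obtain ⟨s, hs1, hs2⟩ := (h4.and h5).exists
  exact absurd hs1 (not_le.2 hs2)

variable {E : Type*} [NormedAddCommGroup E] [InnerProductSpace ℝ E]

local notation "⟪" x ", " y "⟫" => @inner ℝ _ _ x y

/-- The map `y ↦ fderiv ℝ f y e` is differentiable for a `C²` function `f`. -/
lemma diff_fderiv_apply {f : E → ℝ} (hf : ContDiff ℝ 2 f) (e : E) :
    Differentiable ℝ (fun y => fderiv ℝ f y e) := by
  have h1 : ContDiff ℝ 1 (fderiv ℝ f) := hf.fderiv_right (by norm_num)
  exact (ContinuousLinearMap.apply ℝ ℝ e).differentiable.comp (h1.differentiable one_ne_zero)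

lemma fderiv_norm_sq_apply' (y e : E) :
    fderiv ℝ (fun x : E => ‖x‖ ^ 2) y e = 2 * ⟪y, e⟫ := by
  have h : (fun x : E => ‖x‖ ^ 2) = fun x : E => ⟪x, x⟫ := by
    funext x; rw [real_inner_self_eq_norm_sq]
  rw [h, fderiv_inner_apply ℝ differentiableAt_fun_id differentiableAt_fun_id]
  simp [real_inner_comm]
  ring

lemma fderiv_inner_right (x₀ e : E) :
    fderiv ℝ (fun y : E => ⟪y, e⟫) x₀ e = ⟪e, e⟫ := by
  rw [fderiv_inner_apply ℝ differentiableAt_fun_id (differentiableAt_const e)]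
  simp

/-- Second directional derivative inequality at a local maximum of
`x ↦ c·A x − c·B x − ε‖x‖²`. -/
lemma second_dir_le {A B : E → ℝ} (hA : ContDiff ℝ 2 A) (hB : ContDiff ℝ 2 B)
    {c ε : ℝ} (x₀ e : E) (he : ‖e‖ = 1)
    (hmax : IsLocalMax (fun x => c * A x - c * B x - ε * ‖x‖ ^ 2) x₀) :
    c * fderiv ℝ (fun y => fderiv ℝ A y e) x₀ e
      - c * fderiv ℝ (fun y => fderiv ℝ B y e) x₀ e - 2 * ε ≤ 0 := by
  set h : E → ℝ := fun x => c * A x - c * B x - ε * ‖x‖ ^ 2 with hh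
  have hAd : Differentiable ℝ A := hA.differentiable two_ne_zero
  have hBd : Differentiable ℝ B := hB.differentiable two_ne_zero
  have hNc : ContDiff ℝ 2 (fun x : E => ‖x‖ ^ 2) := contDiff_norm_sq ℝ
  have hNd : Differentiable ℝ (fun x : E => ‖x‖ ^ 2) := hNc.differentiable two_ne_zero
  have hhC : ContDiff ℝ 2 h :=
    ((contDiff_const.mul hA).sub (contDiff_const.mul hB)).sub (contDiff_const.mul hNc)
  have hhd : Differentiable ℝ h := hhC.differentiable two_ne_zero
  -- inner fderiv formula
  have P : ∀ y, fderiv ℝ h y e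
      = c * fderiv ℝ A y e - c * fderiv ℝ B y e - (2 * ε) * ⟪y, e⟫ := by
    intro y
    rw [hh]
    rw [fderiv_fun_sub (((hAd y).const_mul c).fun_sub ((hBd y).const_mul c)) ((hNd y).const_mul ε),
      fderiv_fun_sub ((hAd y).const_mul c) ((hBd y).const_mul c),
      fderiv_const_mul (hAd y) c, fderiv_const_mul (hBd y) c,
      fderiv_const_mul (hNd y) ε]
    simp only [ContinuousLinearMap.sub_apply, ContinuousLinearMap.smul_apply, smul_eq_mul]
    rw [fderiv_norm_sq_apply']
    ring
  -- the line
  have hline : ∀ s : ℝ, HasDerivAt (fun s : ℝ => x₀ + s • e) e s := by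
    intro s
    simpa using ((hasDerivAt_id s).smul_const e).const_add x₀
  set q : ℝ → ℝ := fun s => h (x₀ + s • e) with hq_def
  set q' : ℝ → ℝ := fun s => fderiv ℝ h (x₀ + s • e) e with hq'_def
  have hq : ∀ s, HasDerivAt q (q' s) s := fun s => by
    have := (hhd (x₀ + s • e)).hasFDerivAt.comp_hasDerivAt s (hline s); exact this
  have hF : DifferentiableAt ℝ (fun y => fderiv ℝ h y e) x₀ := (diff_fderiv_apply hhC e) x₀
  have hq' : HasDerivAt q' (fderiv ℝ (fun y => fderiv ℝ h y e) x₀ e) 0 := by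
    have h0 : x₀ + (0:ℝ) • e = x₀ := by simp
    have hF2 : HasFDerivAt (fun y => fderiv ℝ h y e)
        (fderiv ℝ (fun y => fderiv ℝ h y e) x₀) (x₀ + (0:ℝ) • e) := by
      rw [h0]; exact hF.hasFDerivAt
    have := hF2.comp_hasDerivAt 0 (hline 0)
    exact this
  have hqmax : IsLocalMax q 0 := by
    have hl : Tendsto (fun s : ℝ => x₀ + s • e) (𝓝 0) (𝓝 x₀) := by
      have : Continuous (fun s : ℝ => x₀ + s • e) :=
        continuous_const.add (continuous_id.smul continuous_const)
      simpa using this.tendsto 0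
    have := hl.eventually hmax
    refine this.mono fun s hs => ?_
    simpa [hq_def] using hs
  have key := second_deriv_nonpos_of_isLocalMax hq hq' hqmax
  -- compute the second derivative
  have PE : (fun y => fderiv ℝ h y e)
      = fun y => c * fderiv ℝ A y e - c * fderiv ℝ B y e - (2 * ε) * ⟪y, e⟫ := funext P
  rw [PE] at key
  have hFA : DifferentiableAt ℝ (fun y => fderiv ℝ A y e) x₀ := diff_fderiv_apply hA e x₀
  have hFB : DifferentiableAt ℝ (fun y => fderiv ℝ B y e) x₀ := diff_fderiv_apply hB e x₀
  have hFI : DifferentiableAt ℝ (fun y : E => ⟪y, e⟫) x₀ :=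
    (differentiableAt_fun_id).inner ℝ (differentiableAt_const e)
  rw [fderiv_fun_sub ((hFA.const_mul c).fun_sub (hFB.const_mul c)) (hFI.const_mul (2 * ε)),
    fderiv_fun_sub (hFA.const_mul c) (hFB.const_mul c),
    fderiv_const_mul hFA c, fderiv_const_mul hFB c, fderiv_const_mul hFI (2 * ε)] at key
  simp only [ContinuousLinearMap.sub_apply, ContinuousLinearMap.smul_apply, smul_eq_mul] at key
  rw [fderiv_inner_right, real_inner_self_eq_norm_sq, he] at key
  linarith

/-- The Laplacian of `f : ℝ^d → ℝ` at `x`: the sum of the second partial derivatives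
of `f` in the coordinate directions. -/
noncomputable def laplacian {d : ℕ} (f : EuclideanSpace ℝ (Fin d) → ℝ)
    (x : EuclideanSpace ℝ (Fin d)) : ℝ :=
  ∑ i : Fin d,
    fderiv ℝ (fun y => fderiv ℝ f y (EuclideanSpace.single i (1 : ℝ))) x
      (EuclideanSpace.single i (1 : ℝ))

set_option maxHeartbeats 1000000 in
/-- Comparison of PDE solutions: Let
`ψ(w) = -βw + αw² + ∫₀^∞ (e^{-wy} - 1 + wy) n(dy)` be a branching mechanism and `φ` a
nonnegative bounded continuous function on `ℝ^d`. If `v, u : [0,∞) × ℝ^d → [0,∞)` are jointly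
continuous, bounded on `[0,T] × ℝ^d` for every `T > 0`, `C¹` in `t` and `C²` in `x`, and solve
`∂_t v = ½Δv - ψ(v) + φ`, `v(0,·) = 0` and `∂_t u = ½Δu + βu - αu² + φ`, `u(0,·) = 0`, then
`v(t,x) ≤ u(t,x)` for all `t ≥ 0` and `x ∈ ℝ^d`. -/
theorem stmt_10 (d : ℕ) (hd : 1 ≤ d) (β α : ℝ) (hα : 0 ≤ α)
    (n : Measure ℝ) [SigmaFinite n] (hsupp : n (Set.Iic 0) = 0)
    (hn : Integrable (fun y => min (y ^ 2) y) n)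
    (ψ : ℝ → ℝ)
    (hψ : ∀ w : ℝ, 0 ≤ w →
      ψ w = -β * w + α * w ^ 2 + ∫ y, (Real.exp (-(w * y)) - 1 + w * y) ∂n)
    (φ : EuclideanSpace ℝ (Fin d) → ℝ)
    (hφ_cont : Continuous φ) (hφ_nonneg : ∀ x, 0 ≤ φ x) (hφ_bdd : ∃ Cφ, ∀ x, φ x ≤ Cφ)
    (v u : ℝ → EuclideanSpace ℝ (Fin d) → ℝ)
    (hv_nonneg : ∀ t, 0 ≤ t → ∀ x, 0 ≤ v t x)
    (hu_nonneg : ∀ t, 0 ≤ t → ∀ x, 0 ≤ u t x)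
    (hv_cont : ContinuousOn (fun p : ℝ × EuclideanSpace ℝ (Fin d) => v p.1 p.2)
      (Set.Ici 0 ×ˢ Set.univ))
    (hu_cont : ContinuousOn (fun p : ℝ × EuclideanSpace ℝ (Fin d) => u p.1 p.2)
      (Set.Ici 0 ×ˢ Set.univ))
    (hv_bdd : ∀ T > (0 : ℝ), ∃ C, ∀ t ∈ Set.Icc (0 : ℝ) T, ∀ x, v t x ≤ C)
    (hu_bdd : ∀ T > (0 : ℝ), ∃ C, ∀ t ∈ Set.Icc (0 : ℝ) T, ∀ x, u t x ≤ C)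
    (hv_x : ∀ t, 0 ≤ t → ContDiff ℝ 2 (v t))
    (hu_x : ∀ t, 0 ≤ t → ContDiff ℝ 2 (u t))
    (hv_pde : ∀ t, 0 ≤ t → ∀ x,
      HasDerivAt (fun τ : ℝ => v τ x)
        ((1 / 2) * laplacian (v t) x - ψ (v t x) + φ x) t)
    (hu_pde : ∀ t, 0 ≤ t → ∀ x,
      HasDerivAt (fun τ : ℝ => u τ x)
        ((1 / 2) * laplacian (u t) x + β * u t x - α * (u t x) ^ 2 + φ x) t)
    (hv0 : ∀ x, v 0 x = 0) (hu0 : ∀ x, u 0 x = 0) :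
    ∀ t : ℝ, 0 ≤ t → ∀ x : EuclideanSpace ℝ (Fin d), v t x ≤ u t x := by
  classical
  -- ψ dominates its quadratic part
  have hψle : ∀ w : ℝ, 0 ≤ w → -β * w + α * w ^ 2 ≤ ψ w := by
    intro w hw
    rw [hψ w hw]
    have hint : 0 ≤ ∫ y, (Real.exp (-(w * y)) - 1 + w * y) ∂n := by
      refine integral_nonneg fun y => ?_
      have := Real.add_one_le_exp (-(w * y))
      simp only [Pi.zero_apply]
      linarith
    linarith
  -- the key barrier estimate
  have key : ∀ T > (0:ℝ), ∀ ε > (0:ℝ), ∀ t ∈ Set.Icc (0:ℝ) T,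
      ∀ x : EuclideanSpace ℝ (Fin d),
      Real.exp (-β * t) * (v t x - u t x) ≤ ε * (1 + ((d:ℝ)+1) * t + ‖x‖ ^ 2) := by
    intro T hT ε hε
    by_contra hcon
    push_neg at hcon
    obtain ⟨t₁, ht₁, x₁, hx₁⟩ := hcon
    obtain ⟨C, hC⟩ := hv_bdd T hT
    have hC0 : 0 ≤ C := le_trans (hv_nonneg 0 le_rfl x₁) (hC 0 ⟨le_rfl, hT.le⟩ x₁)
    set M : ℝ := Real.exp (|β| * T) * C + 1 with hMdef
    have hM0 : 0 < M := by positivity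
    -- the function z is bounded by M on the strip
    have hzM : ∀ t ∈ Set.Icc (0:ℝ) T, ∀ x : EuclideanSpace ℝ (Fin d),
        Real.exp (-β * t) * (v t x - u t x) < M := by
      intro t ht x
      have h1 : v t x - u t x ≤ C :=
        le_trans (sub_le_self _ (hu_nonneg t ht.1 x)) (hC t ht x)
      have h2 : Real.exp (-β * t) ≤ Real.exp (|β| * T) := by
        apply Real.exp_le_exp.2
        calc -β * t ≤ |β| * t := mul_le_mul_of_nonneg_right (neg_le_abs β) ht.1
          _ ≤ |β| * T := mul_le_mul_of_nonneg_left ht.2 (abs_nonneg β)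
      calc Real.exp (-β * t) * (v t x - u t x)
          ≤ Real.exp (-β * t) * C := mul_le_mul_of_nonneg_left h1 (Real.exp_pos _).le
        _ ≤ Real.exp (|β| * T) * C := mul_le_mul_of_nonneg_right h2 hC0
        _ < M := by rw [hMdef]; linarith
    set R : ℝ := Real.sqrt (M / ε) + 1 with hRdef
    have hR1 : 1 ≤ R := by
      rw [hRdef]; nlinarith [Real.sqrt_nonneg (M / ε)]
    have hMR : M < ε * R ^ 2 := by
      have hs : Real.sqrt (M / ε) ^ 2 = M / ε :=
        Real.sq_sqrt (by positivity)
      have : M / ε + 1 ≤ R ^ 2 := by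
        rw [hRdef]; nlinarith [Real.sqrt_nonneg (M / ε)]
      have h3 : M + ε ≤ ε * R ^ 2 := by
        have := mul_le_mul_of_nonneg_left this hε.le
        rw [mul_add, mul_div_cancel₀ _ (ne_of_gt hε)] at this
        linarith
      linarith
    -- the auxiliary function g
    set g : ℝ × EuclideanSpace ℝ (Fin d) → ℝ := fun p =>
      Real.exp (-β * p.1) * (v p.1 p.2 - u p.1 p.2)
        - ε * (1 + ((d:ℝ)+1) * p.1 + ‖p.2‖ ^ 2) with hgdef
    set Kst : Set (ℝ × EuclideanSpace ℝ (Fin d)) :=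
      Set.Icc (0:ℝ) T ×ˢ Metric.closedBall (0 : EuclideanSpace ℝ (Fin d)) R with hKdef
    have hsub : Kst ⊆ Set.Ici (0:ℝ) ×ˢ Set.univ :=
      Set.prod_mono Set.Icc_subset_Ici_self (Set.subset_univ _)
    have hgc : ContinuousOn g Kst := by
      apply ContinuousOn.sub
      · exact (((Real.continuous_exp.comp
          (continuous_const.mul continuous_fst)).continuousOn).mul
          (((hv_cont.sub hu_cont)).mono hsub))
      · exact (continuous_const.mul (((continuous_const.add
          (continuous_const.mul continuous_fst)).add
          (continuous_snd.norm.pow 2)))).continuousOn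
    -- the bad point lies in Kst
    have hx₁R : ‖x₁‖ ≤ R := by
      by_contra hcontra
      push_neg at hcontra
      have h1 : ε * ‖x₁‖ ^ 2 ≤ ε * (1 + ((d:ℝ)+1) * t₁ + ‖x₁‖ ^ 2) := by
        have hdt : (0:ℝ) ≤ ((d:ℝ)+1) * t₁ :=
          mul_nonneg (by positivity) ht₁.1
        nlinarith [hε]
      have h2 : ε * R ^ 2 ≤ ε * ‖x₁‖ ^ 2 := by
        exact mul_le_mul_of_nonneg_left
          (pow_le_pow_left₀ (by linarith : (0:ℝ) ≤ R) hcontra.le 2) hε.le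
      have := hzM t₁ ht₁ x₁
      linarith
    have hp₁K : (t₁, x₁) ∈ Kst := ⟨ht₁, mem_closedBall_zero_iff.2 hx₁R⟩
    have hcomp : IsCompact Kst := isCompact_Icc.prod (isCompact_closedBall 0 R)
    obtain ⟨⟨t₀, x₀⟩, hp₀K, hp₀max⟩ := hcomp.exists_isMaxOn ⟨(t₁, x₁), hp₁K⟩ hgc
    have ht₀T : t₀ ∈ Set.Icc (0:ℝ) T := hp₀K.1
    have hx₀R : ‖x₀‖ ≤ R := mem_closedBall_zero_iff.1 hp₀K.2
    have hg₁ : 0 < g (t₁, x₁) := by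
      rw [hgdef]; simp only; linarith
    have hg₀ : 0 < g (t₀, x₀) := lt_of_lt_of_le hg₁ (hp₀max hp₁K)
    -- t₀ is positive
    have ht₀pos : 0 < t₀ := by
      rcases lt_or_eq_of_le ht₀T.1 with h | h
      · exact h
      · exfalso
        rw [hgdef] at hg₀
        simp only [← h, hv0, hu0] at hg₀
        nlinarith [sq_nonneg ‖x₀‖, hg₀, hε]
    set vp := v t₀ x₀ with hvp
    set up := u t₀ x₀ with hup
    have hup0 : 0 ≤ up := hu_nonneg t₀ ht₀T.1 x₀
    have hwpos : 0 < vp - up := by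
      rw [hgdef] at hg₀
      simp only at hg₀
      have hb : 0 < ε * (1 + ((d:ℝ)+1) * t₀ + ‖x₀‖ ^ 2) := by positivity
      nlinarith [Real.exp_pos (-β * t₀), hg₀]
    have hx₀lt : ‖x₀‖ < R := by
      by_contra hcontra
      push_neg at hcontra
      have h2 : ε * R ^ 2 ≤ ε * ‖x₀‖ ^ 2 :=
        mul_le_mul_of_nonneg_left
          (pow_le_pow_left₀ (by linarith : (0:ℝ) ≤ R) hcontra 2) hε.le
      have h3 := hzM t₀ ht₀T x₀
      rw [hgdef] at hg₀
      simp only at hg₀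
      have hdt : (0:ℝ) ≤ ((d:ℝ)+1) * t₀ := mul_nonneg (by positivity) ht₀T.1
      nlinarith [hdt, hε]
    -- the time derivative inequality
    set Dv : ℝ := (1 / 2) * laplacian (v t₀) x₀ - ψ (v t₀ x₀) + φ x₀ with hDv
    set Du : ℝ := (1 / 2) * laplacian (u t₀) x₀ + β * u t₀ x₀
      - α * (u t₀ x₀) ^ 2 + φ x₀ with hDu
    have hexp : HasDerivAt (fun t : ℝ => Real.exp (-β * t))
        (Real.exp (-β * t₀) * (-β)) t₀ := by
      have h := ((hasDerivAt_id t₀).const_mul (-β)).exp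
      simpa using h
    have hw : HasDerivAt (fun τ : ℝ => v τ x₀ - u τ x₀) (Dv - Du) t₀ :=
      (hv_pde t₀ ht₀T.1 x₀).sub (hu_pde t₀ ht₀T.1 x₀)
    have hlin : HasDerivAt (fun t : ℝ => ε * (1 + ((d:ℝ)+1) * t + ‖x₀‖ ^ 2))
        (ε * (((d:ℝ)+1) * 1)) t₀ := by
      exact ((((hasDerivAt_id t₀).const_mul ((d:ℝ)+1)).const_add 1).add_const
        (‖x₀‖ ^ 2)).const_mul ε
    have hG : HasDerivAt (fun t : ℝ => g (t, x₀))
        (Real.exp (-β * t₀) * (-β) * (v t₀ x₀ - u t₀ x₀)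
          + Real.exp (-β * t₀) * (Dv - Du) - ε * (((d:ℝ)+1) * 1)) t₀ := by
      rw [hgdef]
      exact (hexp.mul hw).sub hlin
    have hGmax : ∀ t ∈ Set.Icc (0:ℝ) t₀, (fun t : ℝ => g (t, x₀)) t
        ≤ (fun t : ℝ => g (t, x₀)) t₀ := by
      intro t ht
      exact hp₀max ⟨⟨ht.1, le_trans ht.2 ht₀T.2⟩, mem_closedBall_zero_iff.2 hx₀R⟩
    have htime := deriv_nonneg_of_isMaxOn_left ht₀pos hG hGmax
    -- the space inequality
    have hsmax : IsLocalMax (fun x => Real.exp (-β * t₀) * v t₀ x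
        - Real.exp (-β * t₀) * u t₀ x - ε * ‖x‖ ^ 2) x₀ := by
      have hball : Metric.ball x₀ (R - ‖x₀‖) ∈ 𝓝 x₀ :=
        Metric.ball_mem_nhds _ (by linarith)
      refine Filter.eventually_of_mem hball fun y hy => ?_
      have hyx : ‖y - x₀‖ < R - ‖x₀‖ := by
        rw [← dist_eq_norm]; exact Metric.mem_ball.1 hy
      have hyR : ‖y‖ ≤ R := by
        have := norm_sub_norm_le y x₀
        linarith
      have hmem : (t₀, y) ∈ Kst := ⟨ht₀T, mem_closedBall_zero_iff.2 hyR⟩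
      have hle : g (t₀, y) ≤ g (t₀, x₀) := hp₀max hmem
      rw [hgdef] at hle
      simp only at hle
      show Real.exp (-β * t₀) * v t₀ y - Real.exp (-β * t₀) * u t₀ y - ε * ‖y‖ ^ 2
        ≤ Real.exp (-β * t₀) * v t₀ x₀ - Real.exp (-β * t₀) * u t₀ x₀ - ε * ‖x₀‖ ^ 2
      nlinarith [hle]
    have hlap : Real.exp (-β * t₀) * laplacian (v t₀) x₀
        - Real.exp (-β * t₀) * laplacian (u t₀) x₀ - 2 * (d:ℝ) * ε ≤ 0 := by
      have hs : ∑ i : Fin d, (Real.exp (-β * t₀)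
            * fderiv ℝ (fun y => fderiv ℝ (v t₀) y (EuclideanSpace.single i (1:ℝ))) x₀
                (EuclideanSpace.single i (1:ℝ))
          - Real.exp (-β * t₀)
            * fderiv ℝ (fun y => fderiv ℝ (u t₀) y (EuclideanSpace.single i (1:ℝ))) x₀
                (EuclideanSpace.single i (1:ℝ)) - 2 * ε) ≤ 0 := by
        refine Finset.sum_nonpos fun i _ => ?_
        refine second_dir_le (hv_x t₀ ht₀T.1) (hu_x t₀ ht₀T.1) x₀
          (EuclideanSpace.single i (1:ℝ)) ?_ hsmax
        simp [EuclideanSpace.norm_single]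
      simp only [Finset.sum_sub_distrib, ← Finset.mul_sum, Finset.sum_const,
        Finset.card_univ, Fintype.card_fin, nsmul_eq_mul] at hs
      rw [laplacian, laplacian]
      linarith
    -- assemble the contradiction
    have hψpt : -β * vp + α * vp ^ 2 ≤ ψ vp := hψle vp (le_trans hup0 (by linarith))
    have hsq : up ^ 2 ≤ vp ^ 2 := pow_le_pow_left₀ hup0 (by linarith) 2
    have he₀ := Real.exp_pos (-β * t₀)
    have hDvDu : Dv - Du = (1/2) * (laplacian (v t₀) x₀ - laplacian (u t₀) x₀)
        - ψ vp - β * up + α * up ^ 2 := by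
      rw [hDv, hDu, hvp, hup]; ring
    rw [hDvDu] at htime
    have hA : Real.exp (-β * t₀) * (-ψ vp) ≤ Real.exp (-β * t₀) * (β * vp - α * vp ^ 2) :=
      mul_le_mul_of_nonneg_left (by linarith) he₀.le
    have hB : Real.exp (-β * t₀) * (α * up ^ 2) ≤ Real.exp (-β * t₀) * (α * vp ^ 2) :=
      mul_le_mul_of_nonneg_left (by nlinarith) he₀.le
    have hdpos : (1:ℝ) ≤ (d:ℝ) := by exact_mod_cast hd
    nlinarith [htime, hlap, hA, hB, hε, he₀]
  -- conclude
  intro t ht x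
  have hz : Real.exp (-β * t) * (v t x - u t x) ≤ 0 := by
    by_contra hpos
    push_neg at hpos
    set z := Real.exp (-β * t) * (v t x - u t x) with hzdef
    set A := 1 + ((d:ℝ)+1) * t + ‖x‖ ^ 2 with hAdef
    have hA0 : 0 < A := by rw [hAdef]; positivity
    have hk := key (t+1) (by linarith) (z / (2 * A)) (by positivity) t ⟨ht, by linarith⟩ x
    rw [← hzdef, ← hAdef] at hk
    rw [div_mul_eq_mul_div, mul_comm] at hk
    have hAz : A * z / (2 * A) = z / 2 := by
      field_simp
    rw [hAz] at hk
    linarith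
  by_contra hvu
  push_neg at hvu
  have hpos2 : 0 < Real.exp (-β * t) * (v t x - u t x) :=
    mul_pos (Real.exp_pos _) (by linarith)
  linarith
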